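/- arXiv:1409.3606 — 6 statements merged into one kernel-verified Lean document; each statement's English description precedes it below -/
import Mathlib

section
/- Let A be a real symmetric n×n matrix with A j = k j, k > 0, a_{xy} ≤ 0 whenever x,y are non-adjacent in a graph G on n vertices, a_{xx} = 0, and A not the zero matrix. Let λ_b be the maximum of |λ| over eigenvalues λ of A on the orthogonal complement of j (assume λ_b > 0). If Y and Z are vertex sets of G with no edge between Y and Z, then √(|Y|·|Z|) ≤ (λ_b/(k + λ_b))·n. -/
/-!
Let `y`, `z` be the characteristic vectors of `Y`, `Z`, let `j` be the all-ones vector, and let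
`u = n y - |Y| j`, `w = n z - |Z| j` be (multiples of) their projections onto `j^⊥`. Since `A`
preserves `j^⊥` and its eigenvalues there are at most `λ` in absolute value, `|uᵀ A w| ≤ λ ‖u‖ ‖w‖`.
As `yᵀ A z ≤ 0` (the only entries involved are diagonal or at non-edges), expanding gives
`k |Y| |Z| ≤ λ √(|Y| (n - |Y|)) √(|Z| (n - |Z|))`. With `s = √(|Y| |Z|)`, AM-GM gives
`√((n - |Y|) (n - |Z|)) ≤ n - s`, hence `k s ≤ λ (n - s)`.
-/

open Matrix

namespace LinearMap.IsSymmetric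

variable {𝕜 E : Type*} [RCLike 𝕜] [NormedAddCommGroup E] [InnerProductSpace 𝕜 E]
  [FiniteDimensional 𝕜 E] {T : E →ₗ[𝕜] E} {r : ℝ}

theorem norm_apply_le_of_forall_hasEigenvalue (hT : T.IsSymmetric) (hr : 0 ≤ r)
    (h : ∀ μ, Module.End.HasEigenvalue T μ → ‖μ‖ ≤ r) (x : E) : ‖T x‖ ≤ r * ‖x‖ := by
  let b := hT.eigenvectorBasis rfl
  rw [← b.repr.norm_map, ← b.repr.norm_map x]
  refine le_of_sq_le_sq ?_ (by positivity)
  rw [mul_pow, EuclideanSpace.norm_sq_eq, EuclideanSpace.norm_sq_eq, Finset.mul_sum]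
  gcongr with i
  rw [hT.eigenvectorBasis_apply_self_apply, norm_mul, mul_pow]
  gcongr
  exact h _ (hT.hasEigenvalue_eigenvalues rfl i)

theorem norm_apply_le_of_invariant {V : Submodule 𝕜 E} (hT : T.IsSymmetric)
    (hV : ∀ v ∈ V, T v ∈ V) (hr : 0 ≤ r)
    (h : ∀ μ : 𝕜, ∀ v ∈ V, v ≠ 0 → T v = μ • v → ‖μ‖ ≤ r) {x : E} (hx : x ∈ V) :
    ‖T x‖ ≤ r * ‖x‖ := by
  refine (hT.restrict_invariant hV).norm_apply_le_of_forall_hasEigenvalue hr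
    (fun μ hμ => ?_) ⟨x, hx⟩
  obtain ⟨v, hv⟩ := hμ.exists_hasEigenvector
  exact h μ v v.2 (by simpa using hv.2) (congrArg Subtype.val hv.apply_eq_smul)

end LinearMap.IsSymmetric

namespace Matrix

variable {ι : Type*} [Fintype ι]

theorem IsSymm.mulVec_dotProduct {A : Matrix ι ι ℝ} (hA : A.IsSymm) (v w : ι → ℝ) :
    A *ᵥ v ⬝ᵥ w = v ⬝ᵥ A *ᵥ w := by
  rw [dotProduct_mulVec, ← hA.eq, vecMul_transpose, hA.eq]

variable [DecidableEq ι]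

theorem indicator_dotProduct_mulVec_indicator {R : Type*} [Semiring R] (A : Matrix ι ι R)
    (s t : Finset ι) :
    (fun i => if i ∈ s then 1 else 0) ⬝ᵥ A *ᵥ (fun i => if i ∈ t then 1 else 0) =
      ∑ i ∈ s, ∑ j ∈ t, A i j := by
  simp [dotProduct, mulVec, Finset.sum_ite_mem]

variable {A : Matrix ι ι ℝ} {e : ι → ℝ} {k r : ℝ}

theorem IsSymm.abs_dotProduct_mulVec_le_of_orthogonal (hA : A.IsSymm) (he : A *ᵥ e = k • e)
    (hr : 0 ≤ r) (h : ∀ l v, v ≠ 0 → v ⬝ᵥ e = 0 → A *ᵥ v = l • v → |l| ≤ r) (u : ι → ℝ)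
    {w : ι → ℝ} (hw : w ⬝ᵥ e = 0) :
    |u ⬝ᵥ A *ᵥ w| ≤ r * (√(u ⬝ᵥ u) * √(w ⬝ᵥ w)) := by
  have hT : A.toEuclideanLin.IsSymmetric :=
    isSymmetric_toEuclideanLin_iff.mpr (isHermitian_iff_isSymm.mpr hA)
  have mem : ∀ v, v ∈ (ℝ ∙ WithLp.toLp 2 e)ᗮ ↔ v.ofLp ⬝ᵥ e = 0 := fun v => by
    rw [Submodule.mem_orthogonal_singleton_iff_inner_right, EuclideanSpace.inner_toLp_toLp]
    simp
  have hV : ∀ v ∈ (ℝ ∙ WithLp.toLp 2 e)ᗮ, A.toEuclideanLin v ∈ (ℝ ∙ WithLp.toLp 2 e)ᗮ := by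
    intro v hv
    rw [mem] at hv ⊢
    simp [hA.mulVec_dotProduct, he, hv]
  have hTw : ‖A.toEuclideanLin (WithLp.toLp 2 w)‖ ≤ r * ‖WithLp.toLp 2 w‖ :=
    hT.norm_apply_le_of_invariant hV hr
      (fun μ v hv hv0 hTv => h μ v.ofLp (by simpa using hv0) ((mem v).mp hv)
        (by simpa using congrArg WithLp.ofLp hTv))
      ((mem (WithLp.toLp 2 w)).mpr hw)
  calc |u ⬝ᵥ A *ᵥ w| = |inner ℝ (WithLp.toLp 2 u) (A.toEuclideanLin (WithLp.toLp 2 w))| := by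
        simp [EuclideanSpace.inner_toLp_toLp, dotProduct_comm]
    _ ≤ ‖WithLp.toLp 2 u‖ * ‖A.toEuclideanLin (WithLp.toLp 2 w)‖ := abs_real_inner_le_norm _ _
    _ ≤ ‖WithLp.toLp 2 u‖ * (r * ‖WithLp.toLp 2 w‖) := by gcongr
    _ = r * (√(u ⬝ᵥ u) * √(w ⬝ᵥ w)) := by
        simp only [norm_eq_sqrt_real_inner, EuclideanSpace.inner_toLp_toLp, star_trivial]
        ring

theorem IsSymm.abs_mul_dotProduct_mulVec_sub_le (hA : A.IsSymm) (he : A *ᵥ e = k • e)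
    (hr : 0 ≤ r) (h : ∀ l v, v ≠ 0 → v ⬝ᵥ e = 0 → A *ᵥ v = l • v → |l| ≤ r) (y z : ι → ℝ) :
    |(e ⬝ᵥ e) * (y ⬝ᵥ A *ᵥ z) - k * ((y ⬝ᵥ e) * (z ⬝ᵥ e))| ≤
      r * (√((e ⬝ᵥ e) * (y ⬝ᵥ y) - (y ⬝ᵥ e) ^ 2) * √((e ⬝ᵥ e) * (z ⬝ᵥ z) - (z ⬝ᵥ e) ^ 2)) := by
  rcases eq_or_ne e 0 with rfl | he0
  · simp
  set m := e ⬝ᵥ e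
  have hm : 0 < m := (dotProduct_self_star_nonneg e).lt_of_ne' (dotProduct_self_eq_zero.not.mpr he0)
  -- `m` times the orthogonal projections of `y` and `z` onto `e^⊥`
  set u := m • y - (y ⬝ᵥ e) • e
  set w := m • z - (z ⬝ᵥ e) • e
  have hw : w ⬝ᵥ e = 0 := by simp [w, m, sub_dotProduct]; ring
  have huu : u ⬝ᵥ u = m * (m * (y ⬝ᵥ y) - (y ⬝ᵥ e) ^ 2) := by
    simp [u, m, sub_dotProduct, dotProduct_sub, dotProduct_comm e y]; ring
  have hww : w ⬝ᵥ w = m * (m * (z ⬝ᵥ z) - (z ⬝ᵥ e) ^ 2) := by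
    simp [w, m, sub_dotProduct, dotProduct_sub, dotProduct_comm e z]; ring
  have huAw : u ⬝ᵥ A *ᵥ w = m * (m * (y ⬝ᵥ A *ᵥ z) - k * ((y ⬝ᵥ e) * (z ⬝ᵥ e))) := by
    simp [u, w, m, mulVec_sub, mulVec_smul, he, sub_dotProduct, dotProduct_sub,
      ← hA.mulVec_dotProduct e, dotProduct_comm e z]
    ring
  have key := hA.abs_dotProduct_mulVec_le_of_orthogonal he hr h u hw
  rw [huAw, huu, hww, abs_mul, abs_of_pos hm, Real.sqrt_mul hm.le, Real.sqrt_mul hm.le,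
    mul_mul_mul_comm, Real.mul_self_sqrt hm.le, mul_left_comm r m] at key
  exact le_of_mul_le_mul_left key hm

end Matrix

namespace Real

theorem sqrt_mul_sub_le_sub_sqrt_mul {a c n : ℝ} (ha : 0 ≤ a) (hc : 0 ≤ c) (han : a ≤ n)
    (hcn : c ≤ n) : √((n - a) * (n - c)) ≤ n - √(a * c) := by
  have hamgm : 2 * √(a * c) ≤ a + c := by
    rw [Real.sqrt_mul ha]
    nlinarith [sq_nonneg (√a - √c), Real.sq_sqrt ha, Real.sq_sqrt hc]
  have hs : √(a * c) ≤ n := Real.sqrt_le_iff.mpr ⟨ha.trans han, by nlinarith⟩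
  rw [Real.sqrt_le_left (by linarith)]
  nlinarith [Real.sq_sqrt (mul_nonneg ha hc)]

theorem sqrt_mul_le_div_add_mul_of_mul_le {a c n k r : ℝ} (ha : 0 ≤ a) (hc : 0 ≤ c)
    (han : a ≤ n) (hcn : c ≤ n) (hk : 0 < k) (hr : 0 ≤ r)
    (h : k * (a * c) ≤ r * (√(n * a - a ^ 2) * √(n * c - c ^ 2))) :
    √(a * c) ≤ r / (k + r) * n := by
  set s := √(a * c)
  have hs : 0 ≤ s := Real.sqrt_nonneg _
  have hprod : √(n * a - a ^ 2) * √(n * c - c ^ 2) = s * √((n - a) * (n - c)) := by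
    rw [← Real.sqrt_mul (by nlinarith), ← Real.sqrt_mul (mul_nonneg ha hc)]
    ring_nf
  have hks : k * s ^ 2 ≤ r * s * (n - s) := by
    rw [Real.sq_sqrt (mul_nonneg ha hc)]
    calc k * (a * c) ≤ r * (s * √((n - a) * (n - c))) := hprod ▸ h
      _ ≤ r * s * (n - s) := by
        rw [← mul_assoc]
        gcongr
        exact sqrt_mul_sub_le_sub_sqrt_mul ha hc han hcn
  rw [div_mul_eq_mul_div, le_div_iff₀ (by linarith)]
  rcases hs.eq_or_lt with hs0 | hs0
  · rw [← hs0]; nlinarith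
  · nlinarith

end Real

theorem cross_intersecting_hoffman_bound_general (n : ℕ)
    (G : SimpleGraph (Fin n))
    (A : Matrix (Fin n) (Fin n) ℝ) (hA : A.IsSymm)
    (hNonAdj : ∀ x y : Fin n, x ≠ y → ¬ G.Adj x y → A x y ≤ 0)
    (hDiag : ∀ x : Fin n, A x x = 0)
    (k : ℝ) (hk : 0 < k)
    (hj : A.mulVec (fun _ => (1 : ℝ)) = k • (fun _ => (1 : ℝ)))
    (lamb : ℝ) (hlamb : 0 < lamb)
    (hmax : IsGreatest {t : ℝ | ∃ (l : ℝ) (v : Fin n → ℝ), v ≠ 0 ∧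
      v ⬝ᵥ (fun _ => (1 : ℝ)) = 0 ∧ A.mulVec v = l • v ∧ t = |l|} lamb)
    (Y Z : Finset (Fin n))
    (hYZ : ∀ y ∈ Y, ∀ z ∈ Z, ¬ G.Adj y z) :
    Real.sqrt ((Y.card : ℝ) * (Z.card : ℝ)) ≤ lamb / (k + lamb) * n := by
  set y : Fin n → ℝ := fun i => if i ∈ Y then 1 else 0
  set z : Fin n → ℝ := fun i => if i ∈ Z then 1 else 0
  have hyAz : y ⬝ᵥ A *ᵥ z ≤ 0 := by
    rw [indicator_dotProduct_mulVec_indicator]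
    refine Finset.sum_nonpos fun y hy => Finset.sum_nonpos fun z hz => ?_
    rcases eq_or_ne y z with rfl | hyz
    · exact (hDiag y).le
    · exact hNonAdj y z hyz (hYZ y hy z hz)
  have key := hA.abs_mul_dotProduct_mulVec_sub_le hj hlamb.le
    (fun l v hv0 hv hAv => hmax.2 ⟨l, v, hv0, hv, hAv, rfl⟩) y z
  have hnyAz : (n : ℝ) * (y ⬝ᵥ A *ᵥ z) ≤ 0 := mul_nonpos_of_nonneg_of_nonpos n.cast_nonneg hyAz
  set X := y ⬝ᵥ A *ᵥ z
  simp only [y, z, dotProduct, mul_ite, mul_one, mul_zero, Finset.sum_ite_mem, Finset.univ_inter,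
    Finset.inter_self, Finset.sum_const, Finset.card_univ, Fintype.card_fin, nsmul_eq_mul] at key
  have hcard : ∀ s : Finset (Fin n), (s.card : ℝ) ≤ n := fun s => by
    exact_mod_cast (Finset.card_le_univ s).trans_eq (Fintype.card_fin n)
  refine Real.sqrt_mul_le_div_add_mul_of_mul_le (by positivity) (by positivity) (hcard Y)
    (hcard Z) hk hlamb.le (le_trans ?_ key)
  rw [abs_sub_comm]
  linarith [le_abs_self (k * (Y.card * Z.card) - n * X)]

/-- Cross-intersecting Hoffman-type bound: if `A` is an extended weight adjacency matrix of a
graph `G` on `n` vertices (symmetric, zero diagonal, nonpositive entries at non-edges, nonzero,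
with `A j = k j`, `k > 0`), `λb > 0` is the maximum of `|λ|` over eigenvalues of `A` on `j^⊥`,
and `Y, Z` are vertex sets with no edges between them, then
`√(|Y|·|Z|) ≤ (λb/(k + λb))·n`. -/
theorem cross_intersecting_hoffman_bound (n : ℕ) (hn : 0 < n)
    (G : SimpleGraph (Fin n))
    (A : Matrix (Fin n) (Fin n) ℝ) (hA : A.IsSymm)
    (hNonAdj : ∀ x y : Fin n, x ≠ y → ¬ G.Adj x y → A x y ≤ 0)
    (hDiag : ∀ x : Fin n, A x x = 0)
    (hA0 : A ≠ 0)
    (k : ℝ) (hk : 0 < k)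
    (hj : A.mulVec (fun _ => (1 : ℝ)) = k • (fun _ => (1 : ℝ)))
    (lamb : ℝ) (hlamb : 0 < lamb)
    (hmax : IsGreatest {t : ℝ | ∃ (l : ℝ) (v : Fin n → ℝ), v ≠ 0 ∧
      v ⬝ᵥ (fun _ => (1 : ℝ)) = 0 ∧ A.mulVec v = l • v ∧ t = |l|} lamb)
    (Y Z : Finset (Fin n))
    (hYZ : ∀ y ∈ Y, ∀ z ∈ Z, ¬ G.Adj y z) :
    Real.sqrt ((Y.card : ℝ) * (Z.card : ℝ)) ≤ lamb / (k + lamb) * n :=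
  cross_intersecting_hoffman_bound_general n G A hA hNonAdj hDiag k hk hj lamb hlamb hmax Y Z hYZ
end

section
/- For every real q ≥ 2 and every integer d ≥ 1: ∏_{i=1}^{d-1} (q^i + 1) ≤ (2 q^d/(q^d+1))·(q^{d(d-1)/2} − q^{(d-1)(d-2)/2} + 1) + q^{(d-2)(d-3)/2 + 2(d-2)}. -/
/-!
Write `B(d)` for the right-hand side, whose last exponent is `binom(d,2) - 1` for every `d`.
Since the left-hand side gets multiplied by `q^d + 1` when `d` increases by one, it suffices to
check `d ≤ 4` directly and to show `B(d) (q^d + 1) ≤ B(d + 1)` for `d ≥ 4`. With `x = q^d` and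
`y = q^(binom(d,2) - 1)` this is a polynomial inequality in `q, x, y`, which holds for `q ≥ 2`
as soon as `y ≥ 2x`, i.e. once `binom(d,2) ≥ d + 2`.
-/

noncomputable def generatorBound (q : ℝ) (d : ℕ) : ℝ :=
  2 * q ^ d / (q ^ d + 1) * (q ^ d.choose 2 - q ^ (d - 1).choose 2 + 1)
    + q ^ ((d.choose 2 : ℤ) - 1)

theorem int_exponent_eq_choose_two_sub_one (d : ℕ) :
    ((d : ℤ) - 2) * ((d : ℤ) - 3) / 2 + 2 * ((d : ℤ) - 2) = (d.choose 2 : ℤ) - 1 := by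
  have h : ((d : ℤ) - 2) * ((d : ℤ) - 3) = 2 * ((d.choose 2 : ℤ) - 2 * d + 3) := by
    qify
    rw [Nat.cast_choose_two]
    ring
  rw [h, Int.mul_ediv_cancel_left _ two_ne_zero]
  ring

theorem prod_le_generatorBound_of_le_four {q : ℝ} (hq : 2 ≤ q) {d : ℕ} (hd : d ≤ 4) :
    ∏ i ∈ Finset.Icc 1 (d - 1), (q ^ i + 1) ≤ generatorBound q d := by
  -- in `t = q - 2` the polynomial inequalities below have nonnegative coefficients only
  obtain ⟨t, ht, rfl⟩ : ∃ t, 0 ≤ t ∧ q = t + 2 := ⟨q - 2, by linarith, by ring⟩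
  interval_cases d <;> norm_num [generatorBound, Finset.prod_Icc_succ_top, Nat.choose]
  · positivity
  · have : 1 ≤ 2 * (t + 2) / (t + 2 + 1) := by rw [le_div_iff₀ (by positivity)]; linarith
    have : 0 ≤ (t + 2)⁻¹ := by positivity
    linarith
  all_goals
    rw [div_mul_eq_mul_div]
    try rw [div_add' _ _ _ (by positivity)]
    rw [le_div_iff₀ (by positivity), ← sub_nonneg]
    ring_nf
    positivity

theorem generatorBound_step_of_two_mul_le {q x y w : ℝ} (hq : 2 ≤ q) (hx : 0 ≤ x)
    (hxy : 2 * x ≤ y) (hw : w * x = q ^ 2 * y) :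
    (2 * x / (x + 1) * (q * y - w + 1) + y) * (x + 1) ≤
      2 * (q * x) / (q * x + 1) * (q * x * y - q * y + 1) + x * y := by
  have hlhs : (2 * x / (x + 1) * (q * y - w + 1) + y) * (x + 1) =
      2 * q * x * y - 2 * q ^ 2 * y + 2 * x + y + x * y := by
    field_simp
    linear_combination (-2) * hw
  have hy : 0 ≤ y := by linarith
  rw [hlhs, div_mul_eq_mul_div, ← sub_le_iff_le_add, le_div_iff₀ (by positivity)]
  have h₁ : 0 ≤ q * x * (y - 2 * x) := by have := sub_nonneg.2 hxy; positivity
  have h₂ : 0 ≤ q * (q - 2) * (q + 1) * x * y := by have := sub_nonneg.2 hq; positivity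
  have h₃ : 0 ≤ y * (2 * q ^ 2 - 1) := mul_nonneg hy (by nlinarith)
  have h₄ : 0 ≤ x * (q - 1) := mul_nonneg hx (by linarith)
  linear_combination h₁ + 2 * h₂ + h₃ + 2 * h₄

theorem generatorBound_mul_le {q : ℝ} (hq : 2 ≤ q) {d : ℕ} (hd : 4 ≤ d) :
    generatorBound q d * (q ^ d + 1) ≤ generatorBound q (d + 1) := by
  obtain ⟨k, rfl⟩ : ∃ k, d = k + 1 := ⟨d - 1, by omega⟩
  have hk : 3 ≤ k.choose 2 := Nat.choose_le_choose 2 (by omega : 3 ≤ k)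
  obtain ⟨n, hn⟩ : ∃ n, k.choose 2 + k = n + 1 := ⟨k.choose 2 + k - 1, by omega⟩
  have h₁ : (k + 1).choose 2 = n + 1 := by
    rw [Nat.choose_succ_succ', Nat.choose_one_right, add_comm, hn]
  have h₂ : (k + 2).choose 2 = n + 1 + (k + 1) := by
    rw [Nat.choose_succ_succ', h₁, Nat.choose_one_right, add_comm]
  have hxy : 2 * q ^ (k + 1) ≤ q ^ n :=
    calc 2 * q ^ (k + 1) ≤ q ^ (k + 2) := by rw [pow_succ _ (k + 1), mul_comm]; gcongr
      _ ≤ q ^ n := pow_le_pow_right₀ (by linarith) (by omega)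
  have hw : q ^ k.choose 2 * q ^ (k + 1) = q ^ 2 * q ^ n := by
    rw [← pow_add, ← pow_add]
    congr 1
    omega
  unfold generatorBound
  simp only [Nat.add_sub_cancel, h₁, h₂]
  push_cast
  simp only [add_sub_cancel_right, zpow_natCast,
    show (n : ℤ) + 1 + (k + 1) - 1 = (k + 1 + n : ℕ) by push_cast; ring]
  convert generatorBound_step_of_two_mul_le hq (by positivity) hxy hw using 3 <;> ring

theorem prod_le_generatorBound {q : ℝ} (hq : 2 ≤ q) (d : ℕ) :
    ∏ i ∈ Finset.Icc 1 (d - 1), (q ^ i + 1) ≤ generatorBound q d := by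
  rcases le_total d 4 with hd | hd
  · exact prod_le_generatorBound_of_le_four hq hd
  induction d, hd using Nat.le_induction with
  | base => exact prod_le_generatorBound_of_le_four hq le_rfl
  | succ d hd ih =>
    obtain ⟨k, rfl⟩ : ∃ k, d = k + 1 := ⟨d - 1, by omega⟩
    calc ∏ i ∈ Finset.Icc 1 (k + 1), (q ^ i + 1)
        = (∏ i ∈ Finset.Icc 1 k, (q ^ i + 1)) * (q ^ (k + 1) + 1) :=
          Finset.prod_Icc_succ_top (by omega) _
      _ ≤ generatorBound q (k + 1) * (q ^ (k + 1) + 1) := by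
          gcongr
          exact ih
      _ ≤ generatorBound q (k + 1 + 1) := generatorBound_mul_le hq hd

theorem bound_on_number_of_generators_general (q : ℝ) (hq : 2 ≤ q) (d : ℕ) :
    ∏ i ∈ Finset.Icc 1 (d - 1), (q ^ i + 1) ≤
      2 * q ^ d / (q ^ d + 1) * (q ^ Nat.choose d 2 - q ^ Nat.choose (d - 1) 2 + 1)
        + q ^ ((((d : ℤ) - 2) * ((d : ℤ) - 3)) / 2 + 2 * ((d : ℤ) - 2)) := by
  rw [int_exponent_eq_choose_two_sub_one]
  exact prod_le_generatorBound hq d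

/-- For every real `q ≥ 2` and every integer `d ≥ 1`:
`∏_{i=1}^{d-1} (q^i + 1) ≤ (2 q^d/(q^d+1))·(q^{binom(d,2)} − q^{binom(d-1,2)} + 1)
  + q^{(d-2)(d-3)/2 + 2(d-2)}`, where the last exponent is interpreted as an integer
(possibly negative for small `d`). -/
theorem bound_on_number_of_generators (q : ℝ) (hq : 2 ≤ q) (d : ℕ) (hd : 1 ≤ d) :
    ∏ i ∈ Finset.Icc 1 (d - 1), (q ^ i + 1) ≤
      2 * q ^ d / (q ^ d + 1) * (q ^ Nat.choose d 2 - q ^ Nat.choose (d - 1) 2 + 1)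
        + q ^ ((((d : ℤ) - 2) * ((d : ℤ) - 3)) / 2 + 2 * ((d : ℤ) - 2)) :=
  bound_on_number_of_generators_general q hq d
end

section
/- Let d ≥ 2 and q ≥ 2, with e = 1 (parabolic/symplectic type). Among λ_r = (−1)^r q^{binom(d−r,2)+binom(r,2)+(d−r)} for r = 0,...,d, the second largest absolute value (i.e., the maximum of |λ_r| over r ≥ 1) is attained exactly at r ∈ {1, d}, and equals q^{binom(d,2)} = q^{d(d-1)/2}. -/
/-!
Writing `d = r + b`, the identity `binom(r + b, 2) = binom(r, 2) + binom(b, 2) + r b` shows that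
the exponent `binom(b, 2) + binom(r, 2) + b` of `|λ_r|` falls short of `binom(d, 2)` by exactly
`(r - 1) b`. This defect vanishes iff `r = 1` or `b = 0`, and `q > 1` makes `q ^ ·` strictly
monotone.
-/

theorem Nat.add_choose_two (a b : ℕ) :
    (a + b).choose 2 = a.choose 2 + b.choose 2 + a * b := by
  induction b with
  | zero => simp
  | succ b ih =>
    rw [← add_assoc, Nat.choose_succ_succ', Nat.choose_succ_succ' b, ih, Nat.choose_one_right,
      Nat.choose_one_right]
    ring

theorem Nat.choose_two_sub_add_defect {d r : ℕ} (hr : 1 ≤ r) (hrd : r ≤ d) :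
    (d - r).choose 2 + r.choose 2 + (d - r) + (r - 1) * (d - r) = d.choose 2 := by
  obtain ⟨b, rfl⟩ := Nat.exists_eq_add_of_le hrd
  have hb : b ≤ r * b := Nat.le_mul_of_pos_left b hr
  rw [Nat.add_sub_cancel_left, Nat.add_choose_two, Nat.sub_one_mul]
  omega

theorem second_largest_abs_eigenvalue_parabolic_general (d : ℕ) (q : ℝ) (hq : 2 ≤ q) :
    ∀ lam : ℕ → ℝ,
      (∀ r, lam r = (-1 : ℝ) ^ r * q ^ (Nat.choose (d - r) 2 + Nat.choose r 2 + (d - r))) →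
      ∀ r, 1 ≤ r → r ≤ d →
        |lam r| ≤ q ^ Nat.choose d 2 ∧ (|lam r| = q ^ Nat.choose d 2 ↔ r = 1 ∨ r = d) := by
  intro lam hlam r hr hrd
  have hq1 : 1 < q := by linarith
  have habs : |lam r| = q ^ ((d - r).choose 2 + r.choose 2 + (d - r)) := by
    rw [hlam, abs_mul, abs_pow, abs_neg, abs_one, one_pow, one_mul, abs_of_pos (by positivity)]
  rw [habs, pow_le_pow_iff_right₀ hq1, pow_right_inj₀ (by positivity) hq1.ne',
    ← Nat.choose_two_sub_add_defect hr hrd]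
  refine ⟨Nat.le_add_right _ _, ?_⟩
  rw [Nat.left_eq_add, mul_eq_zero]
  omega

/-- For `d ≥ 2`, `q ≥ 2` and type `e = 1`, among the eigenvalues
`λ_r = (−1)^r q^{binom(d−r,2)+binom(r,2)+(d−r)}`, `r = 0,…,d`, of the disjointness matrix of
`Q(2d,q)` or `W(2d−1,q)`, the maximum of `|λ_r|` over `r ≥ 1` equals `q^{binom(d,2)}` and is
attained exactly at `r ∈ {1, d}`. -/
theorem second_largest_abs_eigenvalue_parabolic (d : ℕ) (hd : 2 ≤ d) (q : ℝ) (hq : 2 ≤ q) :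
    ∀ lam : ℕ → ℝ,
      (∀ r, lam r = (-1 : ℝ) ^ r * q ^ (Nat.choose (d - r) 2 + Nat.choose r 2 + (d - r))) →
      ∀ r, 1 ≤ r → r ≤ d →
        |lam r| ≤ q ^ Nat.choose d 2 ∧ (|lam r| = q ^ Nat.choose d 2 ↔ r = 1 ∨ r = d) :=
  second_largest_abs_eigenvalue_parabolic_general d q hq
end

section
/- Let V be a symplectic space giving the generalized quadrangle W(3,q) with q odd, and let ℓ₁, ℓ₂, ℓ₃ be three pairwise disjoint totally isotropic lines. Then the number of totally isotropic lines meeting all of ℓ₁, ℓ₂, ℓ₃ is either 0 or 2. -/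
/-!
Since `l₂ ⊕ l₃ = V`, a point `x` of `l₁` lies on exactly one line meeting `l₂` and `l₃`, spanned
by `x` and its projection `π x` to `l₂` along `l₃`, and every line meeting all three lines is of
this form. It is totally isotropic iff `B x (π x) = 0`. As `l₁`, `l₂`, `l₃` are totally
isotropic, `(x, y) ↦ B x (π y)` is a symmetric bilinear form on `l₁`, nondegenerate because `B`
is. So the isotropic transversals are the isotropic points of a nondegenerate binary quadratic
form, and in odd characteristic there are either none or two of them.
-/

/-- A totally isotropic line of the symplectic polar space `W(3,q)`: a 2-dimensional subspace
of `F^4` on which the alternating form `B` vanishes identically. -/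
def IsTotIsoLine {F : Type*} [Field F]
    (B : (Fin 4 → F) →ₗ[F] (Fin 4 → F) →ₗ[F] F) (l : Submodule F (Fin 4 → F)) : Prop :=
  Module.finrank F l = 2 ∧ ∀ x ∈ l, ∀ y ∈ l, B x y = 0

open Module Submodule

section ProjectiveLine

variable {F : Type*} [Field F]

theorem ncard_quadratic_roots_eq_zero_or_two [NeZero (2 : F)] {a b c : F} (ha : a ≠ 0)
    (hd : discrim a b c ≠ 0) :
    {x : F | a * (x * x) + b * x + c = 0}.ncard = 0 ∨
      {x : F | a * (x * x) + b * x + c = 0}.ncard = 2 := by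
  by_cases hroot : ∃ x₀, a * (x₀ * x₀) + b * x₀ + c = 0
  · obtain ⟨x₀, hx₀⟩ := hroot
    set s := 2 * a * x₀ + b
    have hs : discrim a b c = s * s := by rw [discrim_eq_sq_of_quadratic_eq_zero hx₀, sq]
    have hs0 : s ≠ 0 := by rintro h; rw [hs, h, mul_zero] at hd; exact hd rfl
    have hroots : {x : F | a * (x * x) + b * x + c = 0} =
        {(-b + s) / (2 * a), (-b - s) / (2 * a)} := by
      ext x
      simp [quadratic_eq_zero_iff ha hs]
    right
    rw [hroots, Set.ncard_pair]
    rw [Ne, div_left_inj' (mul_ne_zero two_ne_zero ha)]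
    intro h
    have h2s : (2 : F) * s = 0 := by linear_combination h
    exact hs0 ((mul_eq_zero.mp h2s).resolve_left two_ne_zero)
  · left
    have hempty : {x : F | a * (x * x) + b * x + c = 0} = ∅ :=
      Set.eq_empty_of_forall_notMem fun x hx => hroot ⟨x, hx⟩
    rw [hempty, Set.ncard_empty]

/-- Homogeneous coordinates on the projective line over `F`, modelled as `Option F` with `none`
the point at infinity. -/
def projLinePoint : Option F → F × F
  | none => (0, 1)
  | some t => (1, t)

theorem exists_eq_smul_projLinePoint {u : F × F} (hu : u ≠ 0) :
    ∃ c ≠ (0 : F), ∃ o, u = c • projLinePoint o := by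
  obtain ⟨s, t⟩ := u
  by_cases hs : s = 0
  · subst hs
    have ht : t ≠ 0 := by rintro rfl; exact hu rfl
    exact ⟨t, ht, none, by simp [projLinePoint]⟩
  · exact ⟨s, hs, some (t / s), by simp [projLinePoint, mul_div_cancel₀ t hs]⟩

theorem projLinePoint_eq_of_eq_smul {o o' : Option F} {c : F}
    (h : projLinePoint o' = c • projLinePoint o) : o' = o := by
  cases o <;> cases o' <;> simp only [projLinePoint, Prod.smul_mk, smul_eq_mul, Prod.mk.injEq] at h
  · rfl
  · exact absurd h.1 (by simp)
  · rw [mul_one] at h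
    obtain ⟨rfl, h⟩ := h
    simp at h
  · obtain ⟨h1, rfl⟩ := h
    rw [← mul_one c, ← h1, one_mul]

theorem ncard_isotropic_projLinePoint_eq_zero_or_two [NeZero (2 : F)]
    {β : LinearMap.BilinForm F (F × F)} (hsymm : β.IsSymm) (hsep : β.SeparatingLeft) :
    {o | β (projLinePoint o) (projLinePoint o) = 0}.ncard = 0 ∨
      {o | β (projLinePoint o) (projLinePoint o) = 0}.ncard = 2 := by
  set a := β (1, 0) (1, 0)
  set b := β (1, 0) (0, 1)
  set c := β (0, 1) (0, 1)
  have hdet : a * c - b * b ≠ 0 := by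
    have := (LinearMap.separatingLeft_iff_det_ne_zero (Module.Basis.finTwoProd F)).mp hsep
    simpa [Matrix.det_fin_two, LinearMap.toMatrix₂_apply, hsymm.eq (0, 1) (1, 0)] using this
  have hval : ∀ t, β (projLinePoint (some t)) (projLinePoint (some t)) =
      c * (t * t) + 2 * b * t + a := by
    intro t
    have : ((1 : F), t) = (1, 0) + t • (0, 1) := by simp
    simp only [projLinePoint, this, map_add, map_smul, LinearMap.add_apply,
      LinearMap.smul_apply, smul_eq_mul, hsymm.eq (0, 1) (1, 0)]
    ring
  by_cases hc : c = 0
  · have hb : b ≠ 0 := by rintro hb; apply hdet; rw [hb, hc]; ring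
    right
    convert Set.ncard_pair (Option.some_ne_none (-a / (2 * b))).symm
    ext (_ | t)
    · simpa [projLinePoint] using hc
    · simp only [Set.mem_ofPred_eq, hval, hc, Set.mem_insert_iff, Set.mem_singleton_iff,
        reduceCtorEq, false_or, Option.some.injEq]
      rw [eq_div_iff (mul_ne_zero two_ne_zero hb)]
      constructor <;> intro h <;> linear_combination h
  · have himage : {o | β (projLinePoint o) (projLinePoint o) = 0} =
        some '' {t | c * (t * t) + 2 * b * t + a = 0} := by
      ext (_ | t)
      · simpa [projLinePoint] using hc
      · simp [hval]
    rw [himage, Set.ncard_image_of_injective _ (Option.some_injective F)]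
    refine ncard_quadratic_roots_eq_zero_or_two hc ?_
    rw [show discrim c (2 * b) a = -(2 * 2 * (a * c - b * b)) by rw [discrim]; ring]
    simp [hdet, two_ne_zero]

end ProjectiveLine

section Transversals

variable {F V : Type*} [Field F] [AddCommGroup V] [Module F V]

theorem finrank_span_pair_of_disjoint {p q : Submodule F V} (hpq : Disjoint p q) {u w : V}
    (hu : u ∈ p) (hw : w ∈ q) (hu0 : u ≠ 0) (hw0 : w ≠ 0) :
    finrank F (span F {u, w}) = 2 := by
  have hli : LinearIndependent F ![u, w] := by
    rw [LinearIndependent.pair_iff]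
    intro s t hst
    have hsu : s • u = 0 := by
      refine disjoint_def.mp hpq _ (p.smul_mem s hu) ?_
      rw [eq_neg_of_add_eq_zero_left hst]
      exact q.neg_mem (q.smul_mem t hw)
    have hs : s = 0 := (smul_eq_zero.mp hsu).resolve_right hu0
    refine ⟨hs, (smul_eq_zero.mp ?_).resolve_right hw0⟩
    simpa [hs] using hst
  have := finrank_span_eq_card hli
  rwa [Matrix.range_cons_cons_empty, Fintype.card_fin] at this

def IsTotallyIsotropic (B : LinearMap.BilinForm F V) (W : Submodule F V) : Prop :=
  ∀ x ∈ W, ∀ y ∈ W, B x y = 0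

theorem isTotallyIsotropic_span_pair_iff {B : LinearMap.BilinForm F V} (hB : B.IsAlt)
    {u w : V} : IsTotallyIsotropic B (span F {u, w}) ↔ B u w = 0 := by
  refine ⟨fun h => h u (subset_span (by simp)) w (subset_span (by simp)), fun huw => ?_⟩
  have hwu : B w u = 0 := by rw [← hB.neg_eq, huw, neg_zero]
  intro y hy z hz
  obtain ⟨a, b, rfl⟩ := mem_span_pair.mp hy
  obtain ⟨c, d, rfl⟩ := mem_span_pair.mp hz
  simp [hB.self_eq_zero, huw, hwu]

variable {l₁ l₂ l₃ : Submodule F V}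

/-- For `x ∈ l₁`, the line through `x` meeting `l₂` and `l₃`. -/
def transversalThrough (h : IsCompl l₂ l₃) (x : V) : Submodule F V :=
  span F {x, l₂.projection l₃ h x}

theorem projection_ne_zero_of_mem (h₁₃ : Disjoint l₁ l₃) (h : IsCompl l₂ l₃) {x : V}
    (hx : x ∈ l₁) (hx0 : x ≠ 0) : l₂.projection l₃ h x ≠ 0 := by
  rw [Ne, projection_apply_eq_zero_iff]
  exact fun hx₃ => hx0 (disjoint_def.mp h₁₃ x hx hx₃)

theorem finrank_transversalThrough (h₁₂ : Disjoint l₁ l₂) (h₁₃ : Disjoint l₁ l₃)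
    (h : IsCompl l₂ l₃) {x : V} (hx : x ∈ l₁) (hx0 : x ≠ 0) :
    finrank F (transversalThrough h x) = 2 :=
  finrank_span_pair_of_disjoint h₁₂ hx (projection_apply_mem h x) hx0
    (projection_ne_zero_of_mem h₁₃ h hx hx0)

theorem transversalThrough_inf_ne_bot (h₁₂ : Disjoint l₁ l₂) (h₁₃ : Disjoint l₁ l₃)
    (h : IsCompl l₂ l₃) {x : V} (hx : x ∈ l₁) (hx0 : x ≠ 0) :
    transversalThrough h x ⊓ l₁ ≠ ⊥ ∧ transversalThrough h x ⊓ l₂ ≠ ⊥ ∧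
      transversalThrough h x ⊓ l₃ ≠ ⊥ := by
  have hmem : x ∈ transversalThrough h x ∧ l₂.projection l₃ h x ∈ transversalThrough h x :=
    ⟨subset_span (by simp), subset_span (by simp)⟩
  simp only [Submodule.ne_bot_iff, mem_inf]
  refine ⟨⟨x, ⟨hmem.1, hx⟩, hx0⟩,
    ⟨_, ⟨hmem.2, projection_apply_mem h x⟩, projection_ne_zero_of_mem h₁₃ h hx hx0⟩,
    ⟨_, ⟨sub_mem hmem.1 hmem.2, sub_projection_mem h x⟩, fun h0 => hx0 ?_⟩⟩
  rw [sub_eq_zero, eq_comm, projection_eq_self_iff] at h0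
  exact disjoint_def.mp h₁₂ x hx h0

theorem exists_eq_transversalThrough (h₁₂ : Disjoint l₁ l₂) (h₁₃ : Disjoint l₁ l₃)
    (h : IsCompl l₂ l₃) {m : Submodule F V} (hm : finrank F m = 2) (hm₁ : m ⊓ l₁ ≠ ⊥)
    (hm₂ : m ⊓ l₂ ≠ ⊥) (hm₃ : m ⊓ l₃ ≠ ⊥) :
    ∃ x ∈ l₁, x ≠ 0 ∧ m = transversalThrough h x := by
  have : FiniteDimensional F m := .of_finrank_pos (by omega)
  obtain ⟨u, ⟨hum, hu⟩, hu0⟩ := (Submodule.ne_bot_iff _).mp hm₁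
  obtain ⟨w, ⟨hwm, hw⟩, hw0⟩ := (Submodule.ne_bot_iff _).mp hm₂
  obtain ⟨z, ⟨hzm, hz⟩, hz0⟩ := (Submodule.ne_bot_iff _).mp hm₃
  have hspan : span F {u, w} = m :=
    eq_of_le_of_finrank_eq (span_le.mpr (Set.insert_subset hum (by simpa using hwm)))
      (by rw [finrank_span_pair_of_disjoint h₁₂ hu hw hu0 hw0, hm])
  obtain ⟨α, β, rfl⟩ := mem_span_pair.mp (hspan ▸ hzm)
  set φ := l₂.projection l₃ h
  -- `β • w + α • φ u` lies in `l₂` and differs from `z ∈ l₃` by `α • (u - φ u) ∈ l₃`.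
  have hkey : β • w + α • φ u = 0 := by
    refine disjoint_def.mp h.disjoint _
      (add_mem (l₂.smul_mem β hw) (l₂.smul_mem α (projection_apply_mem h u))) ?_
    convert sub_mem hz (l₃.smul_mem α (sub_projection_mem h u)) using 1
    module
  have hα : α ≠ 0 := by
    rintro rfl
    refine hz0 (disjoint_def.mp h.disjoint _ ?_ hz)
    simpa using l₂.smul_mem β hw
  have hφu : φ u ∈ m := by
    rw [← m.smul_mem_iff hα, eq_neg_of_add_eq_zero_right hkey]
    exact m.neg_mem (m.smul_mem β hwm)
  refine ⟨u, hu, hu0, (eq_of_le_of_finrank_eq ?_ ?_).symm⟩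
  · exact span_le.mpr (Set.insert_subset hum (by simpa using hφu))
  · rw [finrank_transversalThrough h₁₂ h₁₃ h hu hu0, hm]

theorem transversalThrough_smul (h : IsCompl l₂ l₃) {c : F} (hc : c ≠ 0) (x : V) :
    transversalThrough h (c • x) = transversalThrough h x := by
  rw [transversalThrough, transversalThrough, map_smul, ← Set.smul_set_singleton,
    ← Set.smul_set_insert, span_smul_eq_of_isUnit _ _ hc.isUnit]

theorem exists_eq_smul_of_transversalThrough_eq (h₁₂ : Disjoint l₁ l₂) (h : IsCompl l₂ l₃)
    {x y : V} (hx : x ∈ l₁) (hy : y ∈ l₁) (hxy : transversalThrough h y = transversalThrough h x) :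
    ∃ c : F, y = c • x := by
  have hyT : y ∈ transversalThrough h x := hxy ▸ subset_span (by simp)
  obtain ⟨α, β, hαβ⟩ := mem_span_pair.mp hyT
  have hβ : β • l₂.projection l₃ h x = 0 := by
    refine disjoint_def.mp h₁₂ _ ?_ (l₂.smul_mem β (projection_apply_mem h x))
    rw [eq_sub_of_add_eq' hαβ]
    exact sub_mem hy (l₁.smul_mem α hx)
  exact ⟨α, by rw [← hαβ, hβ, add_zero]⟩

theorem apply_projection_comm {B : LinearMap.BilinForm F V} (hB : B.IsAlt)
    (hl₁ : IsTotallyIsotropic B l₁) (hl₂ : IsTotallyIsotropic B l₂)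
    (hl₃ : IsTotallyIsotropic B l₃) (h : IsCompl l₂ l₃) {x y : V} (hx : x ∈ l₁) (hy : y ∈ l₁) :
    B x (l₂.projection l₃ h y) = B y (l₂.projection l₃ h x) := by
  have h₁ := hl₁ x hx y hy
  have h₂ := hl₂ _ (projection_apply_mem h x) _ (projection_apply_mem h y)
  have h₃ := hl₃ _ (sub_projection_mem h x) _ (sub_projection_mem h y)
  have hneg := hB.neg_eq (l₂.projection l₃ h x) y
  simp only [map_sub, LinearMap.sub_apply] at h₃
  linear_combination h₁ + h₂ - h₃ + hneg

theorem exists_mem_projection_eq (h₁₃ : Codisjoint l₁ l₃) (h : IsCompl l₂ l₃) {v : V}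
    (hv : v ∈ l₂) : ∃ y ∈ l₁, l₂.projection l₃ h y = v := by
  obtain ⟨y, hy, z, hz, rfl⟩ := mem_sup.mp (codisjoint_iff.mp h₁₃ ▸ mem_top : v ∈ l₁ ⊔ l₃)
  refine ⟨y, hy, ?_⟩
  have hyz := (projection_eq_self_iff h (y + z)).mpr hv
  rwa [map_add, (projection_apply_eq_zero_iff h).mpr hz, add_zero] at hyz

theorem eq_zero_of_forall_apply_projection_eq_zero {B : LinearMap.BilinForm F V}
    (hsep : B.SeparatingLeft) (hl₁ : IsTotallyIsotropic B l₁) (h₁₂ : Codisjoint l₁ l₂)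
    (h₁₃ : Codisjoint l₁ l₃) (h : IsCompl l₂ l₃) {x : V} (hx : x ∈ l₁)
    (hxπ : ∀ y ∈ l₁, B x (l₂.projection l₃ h y) = 0) : x = 0 := by
  refine hsep x fun v => ?_
  obtain ⟨v₁, hv₁, v₂, hv₂, rfl⟩ := mem_sup.mp (codisjoint_iff.mp h₁₂ ▸ mem_top : v ∈ l₁ ⊔ l₂)
  obtain ⟨y, hy, rfl⟩ := exists_mem_projection_eq h₁₃ h hv₂
  rw [map_add, hl₁ x hx v₁ hv₁, hxπ y hy, add_zero]

end Transversals

section Count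

variable {F V : Type*} [Field F] [AddCommGroup V] [Module F V] {l₁ l₂ l₃ : Submodule F V}
  {B : LinearMap.BilinForm F V}

theorem projLinePoint_ne_zero (o : Option F) : projLinePoint o ≠ 0 := by
  cases o <;> simp [projLinePoint]

theorem setOf_isotropic_transversal_eq_image (hB : B.IsAlt) (h₁₂ : Disjoint l₁ l₂)
    (h₁₃ : Disjoint l₁ l₃) (h : IsCompl l₂ l₃) {ψ : F × F →ₗ[F] V}
    (hψ : Function.Injective ψ) (hψl₁ : LinearMap.range ψ = l₁) :
    {m : Submodule F V | (finrank F m = 2 ∧ IsTotallyIsotropic B m) ∧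
        m ⊓ l₁ ≠ ⊥ ∧ m ⊓ l₂ ≠ ⊥ ∧ m ⊓ l₃ ≠ ⊥} =
      (fun o => transversalThrough h (ψ (projLinePoint o))) ''
        {o | B (ψ (projLinePoint o)) (l₂.projection l₃ h (ψ (projLinePoint o))) = 0} := by
  have hmem (u : F × F) : ψ u ∈ l₁ := hψl₁ ▸ LinearMap.mem_range_self ψ u
  have hne (o : Option F) : ψ (projLinePoint o) ≠ 0 :=
    (map_ne_zero_iff ψ hψ).mpr (projLinePoint_ne_zero o)
  ext m
  constructor
  · rintro ⟨⟨hm, hiso⟩, hm₁, hm₂, hm₃⟩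
    obtain ⟨x, hx, hx0, rfl⟩ := exists_eq_transversalThrough h₁₂ h₁₃ h hm hm₁ hm₂ hm₃
    obtain ⟨u, rfl⟩ := LinearMap.mem_range.mp (hψl₁ ▸ hx)
    obtain ⟨c, hc, o, rfl⟩ := exists_eq_smul_projLinePoint (u := u) (by rintro rfl; simp at hx0)
    rw [map_smul, transversalThrough_smul h hc] at hiso ⊢
    exact ⟨o, (isTotallyIsotropic_span_pair_iff hB).mp hiso, rfl⟩
  · rintro ⟨o, ho, rfl⟩
    exact ⟨⟨finrank_transversalThrough h₁₂ h₁₃ h (hmem _) (hne o),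
      (isTotallyIsotropic_span_pair_iff hB).mpr ho⟩,
      transversalThrough_inf_ne_bot h₁₂ h₁₃ h (hmem _) (hne o)⟩

theorem injective_transversalThrough_projLinePoint (h₁₂ : Disjoint l₁ l₂) (h : IsCompl l₂ l₃)
    {ψ : F × F →ₗ[F] V} (hψ : Function.Injective ψ) (hψl₁ : LinearMap.range ψ ≤ l₁) :
    Function.Injective fun o => transversalThrough h (ψ (projLinePoint o)) := by
  intro o o' hoo'
  obtain ⟨c, hc⟩ := exists_eq_smul_of_transversalThrough_eq h₁₂ h (hψl₁ ⟨_, rfl⟩)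
    (hψl₁ ⟨_, rfl⟩) hoo'.symm
  rw [← map_smul] at hc
  exact (projLinePoint_eq_of_eq_smul (hψ hc)).symm

theorem ncard_isotropic_transversals_eq_zero_or_two [NeZero (2 : F)] (hB : B.IsAlt)
    (hsep : B.SeparatingLeft) (hl₁ : IsTotallyIsotropic B l₁) (hl₂ : IsTotallyIsotropic B l₂)
    (hl₃ : IsTotallyIsotropic B l₃) (h₁₂ : IsCompl l₁ l₂) (h₁₃ : IsCompl l₁ l₃)
    (h₂₃ : IsCompl l₂ l₃) (hdim : finrank F l₁ = 2) :
    {m : Submodule F V | (finrank F m = 2 ∧ IsTotallyIsotropic B m) ∧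
        m ⊓ l₁ ≠ ⊥ ∧ m ⊓ l₂ ≠ ⊥ ∧ m ⊓ l₃ ≠ ⊥}.ncard = 0 ∨
    {m : Submodule F V | (finrank F m = 2 ∧ IsTotallyIsotropic B m) ∧
        m ⊓ l₁ ≠ ⊥ ∧ m ⊓ l₂ ≠ ⊥ ∧ m ⊓ l₃ ≠ ⊥}.ncard = 2 := by
  have : Module.Finite F l₁ := Module.finite_of_finrank_pos (by omega)
  let e : l₁ ≃ₗ[F] F × F := LinearEquiv.ofFinrankEq _ _ (by simp [hdim])
  let ψ : F × F →ₗ[F] V := l₁.subtype ∘ₗ e.symm.toLinearMap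
  have hψ : Function.Injective ψ := l₁.injective_subtype.comp e.symm.injective
  have hψl₁ : LinearMap.range ψ = l₁ := by
    rw [LinearMap.range_comp, LinearEquiv.range, Submodule.map_top, range_subtype]
  let β : LinearMap.BilinForm F (F × F) := B.compl₁₂ ψ (l₂.projection l₃ h₂₃ ∘ₗ ψ)
  have hβsymm : β.IsSymm := ⟨fun u v =>
    apply_projection_comm hB hl₁ hl₂ hl₃ h₂₃ (hψl₁ ▸ ⟨u, rfl⟩) (hψl₁ ▸ ⟨v, rfl⟩)⟩
  have hβsep : β.SeparatingLeft := fun u hu => hψ <| by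
    rw [map_zero]
    refine eq_zero_of_forall_apply_projection_eq_zero hsep hl₁ h₁₂.codisjoint h₁₃.codisjoint h₂₃
      (hψl₁ ▸ ⟨u, rfl⟩) fun y hy => ?_
    obtain ⟨v, rfl⟩ := LinearMap.mem_range.mp (hψl₁ ▸ hy)
    exact hu v
  rw [setOf_isotropic_transversal_eq_image hB h₁₂.disjoint h₁₃.disjoint h₂₃ hψ hψl₁,
    Set.ncard_image_of_injective _
      (injective_transversalThrough_projLinePoint h₁₂.disjoint h₂₃ hψ hψl₁.le)]
  exact ncard_isotropic_projLinePoint_eq_zero_or_two hβsymm hβsep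

end Count

/-- In `W(3,q)` with `q` odd, given three pairwise disjoint totally isotropic lines, the number
of totally isotropic lines meeting all three is `0` or `2`. -/
theorem symplectic_three_disjoint_lines (F : Type*) [Field F] [Fintype F]
    (q : ℕ) (hq : Fintype.card F = q) (hodd : Odd q)
    (B : (Fin 4 → F) →ₗ[F] (Fin 4 → F) →ₗ[F] F)
    (halt : ∀ x, B x x = 0)
    (hnd : ∀ x, (∀ y, B x y = 0) → x = 0)
    (l₁ l₂ l₃ : Submodule F (Fin 4 → F))
    (h₁ : IsTotIsoLine B l₁) (h₂ : IsTotIsoLine B l₂) (h₃ : IsTotIsoLine B l₃)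
    (h₁₂ : l₁ ⊓ l₂ = ⊥) (h₁₃ : l₁ ⊓ l₃ = ⊥) (h₂₃ : l₂ ⊓ l₃ = ⊥) :
    Set.ncard {m : Submodule F (Fin 4 → F) |
        IsTotIsoLine B m ∧ m ⊓ l₁ ≠ ⊥ ∧ m ⊓ l₂ ≠ ⊥ ∧ m ⊓ l₃ ≠ ⊥} = 0 ∨
    Set.ncard {m : Submodule F (Fin 4 → F) |
        IsTotIsoLine B m ∧ m ⊓ l₁ ≠ ⊥ ∧ m ⊓ l₂ ≠ ⊥ ∧ m ⊓ l₃ ≠ ⊥} = 2 := by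
  have : NeZero (2 : F) := ⟨Ring.two_ne_zero fun hchar => by
    have := FiniteField.even_card_of_char_two hchar
    rw [hq, Nat.odd_iff.mp hodd] at this
    exact one_ne_zero this⟩
  have hcompl {l l' : Submodule F (Fin 4 → F)} (hl : IsTotIsoLine B l) (hl' : IsTotIsoLine B l')
      (hll' : l ⊓ l' = ⊥) : IsCompl l l' :=
    (isCompl_iff_disjoint l l' (by simp [hl.1, hl'.1])).mpr (disjoint_iff.mpr hll')
  exact ncard_isotropic_transversals_eq_zero_or_two halt hnd h₁.2 h₂.2 h₃.2
    (hcompl h₁ h₂ h₁₂) (hcompl h₁ h₃ h₁₃) (hcompl h₂ h₃ h₂₃) h₁.1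
end

section
/- Let G be a graph on n vertices that is vertex-transitive-like in the sense that its adjacency matrix A is symmetric with A j = k j (k-regular), and suppose Y, Z are vertex sets with no edges between Y and Z achieving equality in the bound √(|Y||Z|) ≤ (λ_b/(k+λ_b)) n, where λ_b = −λ_min(A restricted to j^⊥) > λ_max(A restricted to j^⊥). Then Y = Z. -/
/-!
Subtracting `((k + λ) / n) J`, with `J` the all-ones matrix, from `A` turns the all-ones vector
into an eigenvector with eigenvalue `-λ` and leaves `j^⊥` untouched, so every eigenvalue of
`B = A - ((k + λ) / n) J` lies in `[-λ, λ)`. For `x = √|Z| χ_Y` and `y = √|Y| χ_Z`, polarization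
`4 x⬝By = (x+y)⬝B(x+y) - (x-y)⬝B(x-y)` gives `2 x⬝By ≥ -λ (‖x‖² + ‖y‖²)`, strictly unless
`x = y`. Since `χ_Y⬝Aχ_Z ≤ 0` and `√(|Y||Z|) (k + λ) = λ n`, the reverse inequality holds, so
`x = y`, i.e. `Y = Z`.
-/

open Matrix

namespace Matrix

variable {ι : Type*} [Fintype ι]

lemma IsSymm.dotProduct_mulVec_comm {B : Matrix ι ι ℝ} (hB : B.IsSymm) (x y : ι → ℝ) :
    x ⬝ᵥ (B *ᵥ y) = y ⬝ᵥ (B *ᵥ x) := by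
  rw [dotProduct_mulVec, ← mulVec_transpose, hB.eq, dotProduct_comm]

lemma IsSymm.eigenvalue_eq_or_dotProduct_eq_zero {B : Matrix ι ι ℝ} (hB : B.IsSymm)
    {j v : ι → ℝ} {κ μ : ℝ} (hj : B *ᵥ j = κ • j) (hv : B *ᵥ v = μ • v) :
    μ = κ ∨ v ⬝ᵥ j = 0 := by
  have : μ * (v ⬝ᵥ j) = κ * (v ⬝ᵥ j) := by
    rw [← smul_eq_mul, ← smul_dotProduct, ← hv, ← smul_eq_mul, ← dotProduct_smul, ← hj,
      hB.dotProduct_mulVec_comm, dotProduct_comm]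
  exact (mul_eq_zero.mp (show (μ - κ) * (v ⬝ᵥ j) = 0 by rw [sub_mul, this, sub_self])).imp
    sub_eq_zero.mp id

lemma mulVec_vecMulVec_self (j v : ι → ℝ) : vecMulVec j j *ᵥ v = (v ⬝ᵥ j) • j := by
  ext i
  simp [mulVec, dotProduct, vecMulVec, Finset.mul_sum, mul_comm, mul_left_comm]

lemma IsSymm.eigenpair_of_sub_smul_vecMulVec {A : Matrix ι ι ℝ} (hA : A.IsSymm)
    {j v : ι → ℝ} {k t μ : ℝ} (hj : A *ᵥ j = k • j)
    (hv : (A - t • vecMulVec j j) *ᵥ v = μ • v) :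
    μ = k - t * (j ⬝ᵥ j) ∨ v ⬝ᵥ j = 0 ∧ A *ᵥ v = μ • v := by
  have hB : (A - t • vecMulVec j j).IsSymm := hA.sub (IsSymm.smul (transpose_vecMulVec j j) t)
  have hBj : (A - t • vecMulVec j j) *ᵥ j = (k - t * (j ⬝ᵥ j)) • j := by
    rw [sub_mulVec, smul_mulVec, mulVec_vecMulVec_self, hj, smul_smul, sub_smul]
  refine (hB.eigenvalue_eq_or_dotProduct_eq_zero hBj hv).imp_right fun hvj => ⟨hvj, ?_⟩
  rwa [sub_mulVec, smul_mulVec, mulVec_vecMulVec_self, hvj, zero_smul, smul_zero,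
    sub_zero] at hv

lemma IsSymm.eigenpair_mem_Ico_of_sub_smul_vecMulVec {A : Matrix ι ι ℝ} (hA : A.IsSymm)
    {j : ι → ℝ} {k r t : ℝ} (hr : 0 < r) (hj : A *ᵥ j = k • j) (ht : t * (j ⬝ᵥ j) = k + r)
    (hspec : ∀ (l : ℝ) (v : ι → ℝ), v ≠ 0 → v ⬝ᵥ j = 0 → A *ᵥ v = l • v → -r ≤ l ∧ l < r)
    (μ : ℝ) (v : ι → ℝ) (hv : v ≠ 0) (hBv : (A - t • vecMulVec j j) *ᵥ v = μ • v) :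
    -r ≤ μ ∧ μ < r := by
  rcases hA.eigenpair_of_sub_smul_vecMulVec hj hBv with hμ | ⟨hvj, hAv⟩
  · constructor <;> linarith
  · exact hspec μ v hv hvj hAv

variable [DecidableEq ι]

lemma IsHermitian.coe_eigenvectorBasis_ne_zero {B : Matrix ι ι ℝ} (hB : B.IsHermitian) (i : ι) :
    ⇑(hB.eigenvectorBasis i) ≠ 0 :=
  (WithLp.ofLp_eq_zero 2).ne.2 (hB.eigenvectorBasis.orthonormal.ne_zero i)

lemma IsHermitian.posSemidef_of_eigenpair_nonneg {P : Matrix ι ι ℝ} (hP : P.IsHermitian)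
    (h : ∀ (μ : ℝ) (v : ι → ℝ), v ≠ 0 → P *ᵥ v = μ • v → 0 ≤ μ) : P.PosSemidef :=
  hP.posSemidef_iff_eigenvalues_nonneg.mpr fun i =>
    h _ _ (hP.coe_eigenvectorBasis_ne_zero i) (hP.mulVec_eigenvectorBasis i)

lemma IsHermitian.posDef_of_eigenpair_pos {P : Matrix ι ι ℝ} (hP : P.IsHermitian)
    (h : ∀ (μ : ℝ) (v : ι → ℝ), v ≠ 0 → P *ᵥ v = μ • v → 0 < μ) : P.PosDef :=
  hP.posDef_iff_eigenvalues_pos.mpr fun i =>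
    h _ _ (hP.coe_eigenvectorBasis_ne_zero i) (hP.mulVec_eigenvectorBasis i)

lemma IsSymm.mul_dotProduct_self_le_of_eigenpair {B : Matrix ι ι ℝ} (hB : B.IsSymm) {a : ℝ}
    (h : ∀ (μ : ℝ) (v : ι → ℝ), v ≠ 0 → B *ᵥ v = μ • v → a ≤ μ) (x : ι → ℝ) :
    a * (x ⬝ᵥ x) ≤ x ⬝ᵥ (B *ᵥ x) := by
  have hP : (B - a • 1).IsHermitian := isHermitian_iff_isSymm.mpr (hB.sub (isSymm_one.smul a))
  have := (hP.posSemidef_of_eigenpair_nonneg fun μ v hv hPv => by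
    simp only [sub_mulVec, smul_mulVec, one_mulVec] at hPv
    have := h (μ + a) v hv (by rw [add_smul, ← hPv]; abel)
    linarith).dotProduct_mulVec_nonneg x
  simpa [sub_mulVec, smul_mulVec, dotProduct_sub, dotProduct_smul] using this

lemma IsSymm.dotProduct_mulVec_self_lt_of_eigenpair {B : Matrix ι ι ℝ} (hB : B.IsSymm) {b : ℝ}
    (h : ∀ (μ : ℝ) (v : ι → ℝ), v ≠ 0 → B *ᵥ v = μ • v → μ < b) {x : ι → ℝ} (hx : x ≠ 0) :
    x ⬝ᵥ (B *ᵥ x) < b * (x ⬝ᵥ x) := by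
  have hP : (b • 1 - B).IsHermitian := isHermitian_iff_isSymm.mpr ((isSymm_one.smul b).sub hB)
  have := (hP.posDef_of_eigenpair_pos fun μ v hv hPv => by
    simp only [sub_mulVec, smul_mulVec, one_mulVec] at hPv
    have := h (b - μ) v hv (by rw [sub_smul, ← hPv]; abel)
    linarith).dotProduct_mulVec_pos hx
  simpa [sub_mulVec, smul_mulVec, dotProduct_sub, dotProduct_smul] using this

lemma IsSymm.eq_of_two_mul_dotProduct_mulVec_le {B : Matrix ι ι ℝ} (hB : B.IsSymm) {r : ℝ}
    (hspec : ∀ (μ : ℝ) (v : ι → ℝ), v ≠ 0 → B *ᵥ v = μ • v → -r ≤ μ ∧ μ < r)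
    {x y : ι → ℝ} (h : 2 * (x ⬝ᵥ (B *ᵥ y)) ≤ -r * (x ⬝ᵥ x + y ⬝ᵥ y)) : x = y := by
  by_contra hxy
  have hsum := hB.mul_dotProduct_self_le_of_eigenpair (fun μ v hv hBv => (hspec μ v hv hBv).1)
    (x + y)
  have hdiff := hB.dotProduct_mulVec_self_lt_of_eigenpair
    (fun μ v hv hBv => (hspec μ v hv hBv).2) (sub_ne_zero.mpr hxy)
  have hyx := hB.dotProduct_mulVec_comm x y
  simp only [mulVec_add, mulVec_sub, dotProduct_add, dotProduct_sub, add_dotProduct,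
    sub_dotProduct, dotProduct_comm y x] at hsum hdiff
  linarith

end Matrix

namespace Finset

variable {ι : Type*} [DecidableEq ι]

def charVec (s : Finset ι) : ι → ℝ := fun i => if i ∈ s then 1 else 0

lemma eq_of_smul_charVec_eq {s t : Finset ι} {a b : ℝ} (ha : a ≠ 0) (hb : b ≠ 0)
    (h : a • charVec s = b • charVec t) : s = t := by
  ext i
  have := congrFun h i
  by_cases hs : i ∈ s <;> by_cases ht : i ∈ t <;> simp_all [charVec]

variable [Fintype ι]

lemma charVec_dotProduct_one (s : Finset ι) : charVec s ⬝ᵥ (fun _ => 1) = #s := by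
  simp [charVec, dotProduct]

lemma charVec_dotProduct_self (s : Finset ι) : charVec s ⬝ᵥ charVec s = #s := by
  simp [charVec, dotProduct]

lemma charVec_dotProduct_mulVec_charVec (A : Matrix ι ι ℝ) (s t : Finset ι) :
    charVec s ⬝ᵥ (A *ᵥ charVec t) = ∑ i ∈ s, ∑ j ∈ t, A i j := by
  simp [charVec, dotProduct, mulVec, sum_ite_mem]

lemma eq_of_charVec_dotProduct_mulVec_nonpos {A : Matrix ι ι ℝ} (hA : A.IsSymm) {c r : ℝ}
    (hspec : ∀ (μ : ℝ) (v : ι → ℝ), v ≠ 0 →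
      (A - c • vecMulVec (fun _ => 1) (fun _ => 1)) *ᵥ v = μ • v → -r ≤ μ ∧ μ < r)
    {Y Z : Finset ι} (hs : 0 < Real.sqrt (#Y * #Z)) (hcs : c * Real.sqrt (#Y * #Z) = r)
    (hcross : charVec Y ⬝ᵥ (A *ᵥ charVec Z) ≤ 0) : Y = Z := by
  have hB := hA.sub (IsSymm.smul (transpose_vecMulVec (fun _ : ι => (1 : ℝ)) fun _ => 1) c)
  have hab : Real.sqrt #Y * Real.sqrt #Z = Real.sqrt (#Y * #Z) :=
    (Real.sqrt_mul (Nat.cast_nonneg _) _).symm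
  have ha := Real.mul_self_sqrt (Nat.cast_nonneg (α := ℝ) #Y)
  have hb := Real.mul_self_sqrt (Nat.cast_nonneg (α := ℝ) #Z)
  have hsqrt_ne : Real.sqrt #Y * Real.sqrt #Z ≠ 0 := hab ▸ hs.ne'
  refine eq_of_smul_charVec_eq (right_ne_zero_of_mul hsqrt_ne) (left_ne_zero_of_mul hsqrt_ne)
    (hB.eq_of_two_mul_dotProduct_mulVec_le hspec ?_)
  simp only [sub_mulVec, smul_mulVec, mulVec_smul, mulVec_vecMulVec_self, dotProduct_smul,
    smul_dotProduct, dotProduct_sub, charVec_dotProduct_self, charVec_dotProduct_one, smul_eq_mul]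
  linear_combination 2 * mul_nonpos_of_nonneg_of_nonpos hs.le hcross
    + (2 * (charVec Y ⬝ᵥ (A *ᵥ charVec Z)) - 2 * c * #Z * #Y) * hab
    - 2 * #Z * #Y * hcs + r * #Y * hb + r * #Z * ha

end Finset

open Finset

theorem cross_intersecting_hoffman_equality_negative_case_general (n : ℕ) (hn : 0 < n)
    (G : SimpleGraph (Fin n))
    (A : Matrix (Fin n) (Fin n) ℝ) (hA : A.IsSymm)
    (hNonAdj : ∀ x y : Fin n, x ≠ y → ¬ G.Adj x y → A x y ≤ 0)
    (hDiag : ∀ x : Fin n, A x x = 0)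
    (k : ℝ) (hk : 0 < k)
    (hj : A.mulVec (fun _ => (1 : ℝ)) = k • (fun _ => (1 : ℝ)))
    (lamb : ℝ) (hlamb : 0 < lamb)
    (hspec : ∀ (l : ℝ) (v : Fin n → ℝ), v ≠ 0 → v ⬝ᵥ (fun _ => (1 : ℝ)) = 0 →
      A.mulVec v = l • v → -lamb ≤ l ∧ l < lamb)
    (Y Z : Finset (Fin n))
    (hYZ : ∀ y ∈ Y, ∀ z ∈ Z, ¬ G.Adj y z)
    (heq : Real.sqrt ((Y.card : ℝ) * (Z.card : ℝ)) = lamb / (k + lamb) * n) :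
    Y = Z := by
  have hc : (k + lamb) / n * n = k + lamb := div_mul_cancel₀ _ (by positivity)
  have hs : 0 < Real.sqrt ((Y.card : ℝ) * Z.card) := heq ▸ by positivity
  have hcs : (k + lamb) / n * Real.sqrt ((Y.card : ℝ) * Z.card) = lamb := by
    rw [heq]
    field_simp
  refine eq_of_charVec_dotProduct_mulVec_nonpos hA
    (hA.eigenpair_mem_Ico_of_sub_smul_vecMulVec hlamb hj (by simpa [dotProduct] using hc) hspec)
    hs hcs ?_
  rw [charVec_dotProduct_mulVec_charVec]
  refine sum_nonpos fun y hy => sum_nonpos fun z hz => ?_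
  rcases eq_or_ne y z with rfl | hyz
  · exact (hDiag y).le
  · exact hNonAdj y z hyz (hYZ y hy z hz)

/-- If equality holds in the cross-intersecting Hoffman bound and the second largest absolute
eigenvalue `λb` is attained only by the smallest eigenvalue `−λb` on `j^⊥` (i.e. every
eigenvalue `l` on `j^⊥` satisfies `−λb ≤ l < λb`), then `Y = Z`. -/
theorem cross_intersecting_hoffman_equality_negative_case (n : ℕ) (hn : 0 < n)
    (G : SimpleGraph (Fin n))
    (A : Matrix (Fin n) (Fin n) ℝ) (hA : A.IsSymm)
    (hNonAdj : ∀ x y : Fin n, x ≠ y → ¬ G.Adj x y → A x y ≤ 0)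
    (hDiag : ∀ x : Fin n, A x x = 0)
    (hA0 : A ≠ 0)
    (k : ℝ) (hk : 0 < k)
    (hj : A.mulVec (fun _ => (1 : ℝ)) = k • (fun _ => (1 : ℝ)))
    (lamb : ℝ) (hlamb : 0 < lamb)
    (hmin : ∃ v : Fin n → ℝ, v ≠ 0 ∧ v ⬝ᵥ (fun _ => (1 : ℝ)) = 0 ∧
      A.mulVec v = (-lamb) • v)
    (hspec : ∀ (l : ℝ) (v : Fin n → ℝ), v ≠ 0 → v ⬝ᵥ (fun _ => (1 : ℝ)) = 0 →
      A.mulVec v = l • v → -lamb ≤ l ∧ l < lamb)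
    (Y Z : Finset (Fin n))
    (hYZ : ∀ y ∈ Y, ∀ z ∈ Z, ¬ G.Adj y z)
    (heq : Real.sqrt ((Y.card : ℝ) * (Z.card : ℝ)) = lamb / (k + lamb) * n) :
    Y = Z :=
  cross_intersecting_hoffman_equality_negative_case_general n hn G A hA hNonAdj hDiag k hk hj lamb
    hlamb hspec Y Z hYZ heq
end

section
/- For d ≥ 2 and q ≥ 2: 2(q^{d(d−1)/2} + 1) + [d choose 2]_q · q^{(d−2)(d−3)/2} > ∏_{i=1}^{d−1}(q^i + 1). -/
/-!
Put `x = q⁻¹ ≤ 1 / 2` and `N = binom(d, 2)`. Pulling `q ^ i` out of every factor gives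
`∏ (q ^ i + 1) = q ^ N ∏ (1 + x ^ i)`; since `∑_{i ≥ 2} x ^ i ≤ 1 / 2`, the factors with `i ≥ 2`
are controlled by `∏ (1 + aᵢ) ≤ 1 + 2 ∑ aᵢ`, valid whenever `2 ∑ aᵢ ≤ 1`. Likewise
`[d choose 2]_q q ^ binom(d - 2, 2) = q ^ N x (1 - x ^ d) (1 - x ^ (d - 1)) / ((1 - x) (1 - x ^ 2))`.
After dividing by `q ^ N` what remains is a rational inequality in `x` and `y = x ^ (d - 2)` whose
numerator is a sum of nonnegative terms.
-/

/-- The Gaussian binomial coefficient `[n choose k]_q`. -/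
noncomputable def gbinom (q : ℝ) (n k : ℕ) : ℝ :=
  if k ≤ n then ∏ i ∈ Finset.range k, (q ^ (n - i) - 1) / (q ^ (i + 1) - 1) else 0

theorem Finset.prod_one_add_le_one_add_two_mul_sum {ι R : Type*} [CommSemiring R] [PartialOrder R]
    [IsOrderedRing R] (s : Finset ι) {a : ι → R} (ha : ∀ i ∈ s, 0 ≤ a i)
    (hs : 2 * ∑ i ∈ s, a i ≤ 1) : ∏ i ∈ s, (1 + a i) ≤ 1 + 2 * ∑ i ∈ s, a i := by
  classical
  induction s using Finset.induction_on with
  | empty => simp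
  | insert j s hj ih =>
    rw [Finset.prod_insert hj, Finset.sum_insert hj] at *
    have haj : 0 ≤ a j := ha j (Finset.mem_insert_self j s)
    have hS : 2 * ∑ i ∈ s, a i ≤ 1 :=
      le_trans (by rw [mul_add]; exact le_add_of_nonneg_left (mul_nonneg zero_le_two haj)) hs
    calc (1 + a j) * ∏ i ∈ s, (1 + a i)
        ≤ (1 + a j) * (1 + 2 * ∑ i ∈ s, a i) :=
          mul_le_mul_of_nonneg_left (ih (fun i hi => ha i (Finset.mem_insert_of_mem hi)) hS)
            (add_nonneg zero_le_one haj)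
      _ = 1 + 2 * ∑ i ∈ s, a i + a j + a j * (2 * ∑ i ∈ s, a i) := by ring
      _ ≤ 1 + 2 * ∑ i ∈ s, a i + a j + a j * 1 := by gcongr
      _ = 1 + 2 * (a j + ∑ i ∈ s, a i) := by ring

section OrderedField

variable {K : Type*} [Field K] [LinearOrder K] [IsStrictOrderedRing K]

theorem sum_range_pow_add_two {x : K} (hx : x < 1) (n : ℕ) :
    ∑ i ∈ Finset.range n, x ^ (i + 2) = x ^ 2 * (1 - x ^ n) / (1 - x) := by
  have h1 : 1 - x ≠ 0 := by linarith
  have h2 : x - 1 ≠ 0 := by linarith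
  calc ∑ i ∈ Finset.range n, x ^ (i + 2) = x ^ 2 * ∑ i ∈ Finset.range n, x ^ i := by
        rw [Finset.mul_sum]
        exact Finset.sum_congr rfl fun i _ => by ring
    _ = x ^ 2 * (1 - x ^ n) / (1 - x) := by
        rw [geom_sum_eq hx.ne]
        field_simp
        ring

theorem prod_Icc_one_add_pow_le {x : K} (hx0 : 0 ≤ x) (hx : x ≤ 1 / 2) (n : ℕ) :
    ∏ i ∈ Finset.Icc 1 (n + 1), (1 + x ^ i) ≤
      (1 + x) * (1 + 2 * (x ^ 2 * (1 - x ^ n) / (1 - x))) := by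
  have hx1 : x < 1 := by linarith
  have hshift : ∏ i ∈ Finset.Icc 1 (n + 1), (1 + x ^ i) =
      (1 + x) * ∏ i ∈ Finset.range n, (1 + x ^ (i + 2)) := by
    induction n with
    | zero => simp
    | succ n ih => rw [Finset.prod_Icc_succ_top (by omega), ih, Finset.prod_range_succ, mul_assoc]
  rw [hshift, ← sum_range_pow_add_two hx1]
  gcongr
  refine Finset.prod_one_add_le_one_add_two_mul_sum _ (fun i _ => by positivity) ?_
  rw [sum_range_pow_add_two hx1, mul_div_assoc', div_le_one (by linarith)]
  have : 0 ≤ (1 - 2 * x) * (1 + x) := mul_nonneg (by linarith) (by linarith)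
  nlinarith [pow_nonneg hx0 n]

theorem one_add_mul_one_add_lt_two_add {x y : K} (hx0 : 0 < x) (hx : x ≤ 1 / 2) (hy : 0 ≤ y) :
    (1 + x) * (1 + 2 * (x ^ 2 * (1 - y) / (1 - x))) <
      2 + x * (1 - x ^ 2 * y) * (1 - x * y) / ((1 - x) * (1 - x ^ 2)) := by
  have h1 : 1 - x ≠ 0 := by linarith
  have h2 : 1 - x ^ 2 ≠ 0 := by nlinarith
  have hD : 0 < (1 - x) * (1 - x ^ 2) := by nlinarith
  have hdiff : 2 + x * (1 - x ^ 2 * y) * (1 - x * y) / ((1 - x) * (1 - x ^ 2)) -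
      (1 + x) * (1 + 2 * (x ^ 2 * (1 - y) / (1 - x))) =
      ((1 - 2 * x) * (1 + x) + x ^ 4 + 2 * x ^ 5 + x ^ 2 * y * ((1 + x) * (1 - 2 * x ^ 2)) +
        x ^ 4 * y ^ 2) / ((1 - x) * (1 - x ^ 2)) := by
    field_simp
    ring
  have hnum : 0 < (1 - 2 * x) * (1 + x) + x ^ 4 + 2 * x ^ 5 +
      x ^ 2 * y * ((1 + x) * (1 - 2 * x ^ 2)) + x ^ 4 * y ^ 2 := by
    have : 0 ≤ (1 - 2 * x) * (1 + x) := mul_nonneg (by linarith) (by linarith)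
    have : 0 ≤ x ^ 2 * y * ((1 + x) * (1 - 2 * x ^ 2)) :=
      mul_nonneg (by positivity) (mul_nonneg (by linarith) (by nlinarith))
    positivity
  rw [← sub_pos, hdiff]
  exact div_pos hnum hD

end OrderedField

theorem prod_Icc_pow_add_one_eq {K : Type*} [Field K] {q : K} (hq : q ≠ 0) (n : ℕ) :
    ∏ i ∈ Finset.Icc 1 n, (q ^ i + 1) =
      q ^ (n + 1).choose 2 * ∏ i ∈ Finset.Icc 1 n, (1 + q⁻¹ ^ i) := by
  induction n with
  | zero => simp
  | succ n ih =>
    rw [Finset.prod_Icc_succ_top (by omega), Finset.prod_Icc_succ_top (by omega), ih,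
      Nat.choose_succ_succ' (n + 1) 1, Nat.choose_one_right, pow_add, inv_pow]
    field_simp
    ring

theorem gbinom_two (q : ℝ) (n : ℕ) :
    gbinom q (n + 2) 2 = (q ^ (n + 2) - 1) * (q ^ (n + 1) - 1) / ((q - 1) * (q ^ 2 - 1)) := by
  simp [gbinom, Finset.prod_range_succ]

theorem Nat.choose_add_two_two (n : ℕ) : (n + 2).choose 2 = n.choose 2 + (2 * n + 1) := by
  rw [Nat.choose_succ_succ', Nat.choose_succ_succ' n 1]
  simp only [Nat.choose_one_right, Nat.reduceAdd]
  omega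

theorem gbinom_two_mul_pow_choose {q : ℝ} (hq : 1 < q) (n : ℕ) :
    gbinom q (n + 2) 2 * q ^ n.choose 2 =
      q ^ (n + 2).choose 2 * (q⁻¹ * (1 - q⁻¹ ^ (n + 2)) * (1 - q⁻¹ ^ (n + 1)) /
        ((1 - q⁻¹) * (1 - q⁻¹ ^ 2))) := by
  have h1 : q - 1 ≠ 0 := by linarith
  have h2 : q ^ 2 - 1 ≠ 0 := by nlinarith
  rw [gbinom_two, Nat.choose_add_two_two, pow_add, inv_pow, inv_pow, inv_pow]
  field_simp
  ring

/-- For `d ≥ 2` and `q ≥ 2`: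
`2(q^{binom(d,2)} + 1) + [d choose 2]_q q^{binom(d−2,2)} > ∏_{i=1}^{d−1}(q^i + 1)`. -/
theorem generator_count_contradiction (q : ℝ) (hq : 2 ≤ q) (d : ℕ) (hd : 2 ≤ d) :
    ∏ i ∈ Finset.Icc 1 (d - 1), (q ^ i + 1) <
      2 * (q ^ Nat.choose d 2 + 1) + gbinom q d 2 * q ^ Nat.choose (d - 2) 2 := by
  obtain ⟨m, rfl⟩ : ∃ m, d = m + 2 := ⟨d - 2, by omega⟩
  rw [show m + 2 - 1 = m + 1 from rfl, show m + 2 - 2 = m from rfl]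
  have hx0 : 0 < q⁻¹ := by positivity
  have hx : q⁻¹ ≤ 1 / 2 := by rw [one_div]; exact inv_anti₀ two_pos hq
  have hqN : 0 < q ^ (m + 2).choose 2 := by positivity
  calc ∏ i ∈ Finset.Icc 1 (m + 1), (q ^ i + 1)
      = q ^ (m + 2).choose 2 * ∏ i ∈ Finset.Icc 1 (m + 1), (1 + q⁻¹ ^ i) :=
        prod_Icc_pow_add_one_eq (by positivity) (m + 1)
    _ ≤ q ^ (m + 2).choose 2 * ((1 + q⁻¹) * (1 + 2 * (q⁻¹ ^ 2 * (1 - q⁻¹ ^ m) / (1 - q⁻¹)))) := by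
        gcongr
        exact prod_Icc_one_add_pow_le hx0.le hx m
    _ < q ^ (m + 2).choose 2 * (2 + q⁻¹ * (1 - q⁻¹ ^ 2 * q⁻¹ ^ m) * (1 - q⁻¹ * q⁻¹ ^ m) /
          ((1 - q⁻¹) * (1 - q⁻¹ ^ 2))) :=
        mul_lt_mul_of_pos_left (one_add_mul_one_add_lt_two_add hx0 hx (by positivity)) hqN
    _ = 2 * q ^ (m + 2).choose 2 + gbinom q (m + 2) 2 * q ^ m.choose 2 := by
        rw [gbinom_two_mul_pow_choose (by linarith)]
        ring
    _ < 2 * (q ^ (m + 2).choose 2 + 1) + gbinom q (m + 2) 2 * q ^ m.choose 2 := by linarith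
end
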